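/- arXiv:2203.03607 — 3 statements merged into one kernel-verified Lean document; each statement's English description precedes it below -/
import Mathlib

section
/- Let p_s(x) = (2πs)^{−1/2} exp(−x²/(2s)). Fix δ ∈ (0,1) and M > 0. There exists a constant C (one may take C = 2 (1−δ)^{−2} e^{M²}) such that for all t ∈ (0, δ), all y₁ > y₂, and all a₁, a₂ with −M ≤ a₂ < a₁ ≤ M, the following holds: det( p_{1−t}(y_i − a_j) )_{i,j=1}² ≤ C · (y₁ − y₂)(a₁ − a₂) p₁(a₁) p₁(a₂). -/
/-!
Writing `u = (y₁ - y₂)(a₁ - a₂)` and `s = 1 - t`, the two products in the determinant are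
`(2πs)⁻¹ e^{E₁}` and `(2πs)⁻¹ e^{E₂}` with `E₂ ≤ E₁ ≤ 0` and `E₁ - E₂ = u / s`. Since `exp` is
1-Lipschitz on `(-∞, 0]`, the determinant is at most `u / (2π s²) ≤ u / (2π (1 - δ)²)`, while
`p₁(a₁) p₁(a₂) ≥ (2π)⁻¹ e^{-M²}` for `|a₁|, |a₂| ≤ M`.
-/

/-- The standard heat kernel `p_s(x) = (2πs)^{-1/2} exp(-x²/(2s))`. -/
noncomputable def heatKernel (s x : ℝ) : ℝ :=
    (Real.sqrt (2 * Real.pi * s))⁻¹ * Real.exp (-x ^ 2 / (2 * s))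

open Real

lemma Real.exp_sub_exp_le_of_nonpos {a b : ℝ} (ha : a ≤ 0) (hba : b ≤ a) :
    exp a - exp b ≤ a - b := by
  have hfactor : exp a - exp b = exp a * (1 - exp (b - a)) := by
    rw [mul_sub, mul_one, ← exp_add, add_sub_cancel]
  have hlin : 1 - exp (b - a) ≤ a - b := by linarith [add_one_le_exp (b - a)]
  calc exp a - exp b = exp a * (1 - exp (b - a)) := hfactor
    _ ≤ 1 * (a - b) := by
        gcongr
        · linarith [exp_le_one_iff.mpr (sub_nonpos.mpr hba)]
        · exact exp_le_one_iff.mpr ha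
    _ = a - b := one_mul _

lemma heatKernel_mul_heatKernel {s : ℝ} (hs : 0 < s) (x y : ℝ) :
    heatKernel s x * heatKernel s y = (2 * π * s)⁻¹ * exp (-(x ^ 2 + y ^ 2) / (2 * s)) := by
  have hsqrt : (√(2 * π * s))⁻¹ * (√(2 * π * s))⁻¹ = (2 * π * s)⁻¹ := by
    rw [← mul_inv, mul_self_sqrt (by positivity)]
  rw [heatKernel, heatKernel, mul_mul_mul_comm, hsqrt, ← exp_add, neg_add, add_div]

lemma heatKernel_det_le {s : ℝ} (hs : 0 < s) {y₁ y₂ a₁ a₂ : ℝ}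
    (h : 0 ≤ (y₁ - y₂) * (a₁ - a₂)) :
    heatKernel s (y₁ - a₁) * heatKernel s (y₂ - a₂)
        - heatKernel s (y₁ - a₂) * heatKernel s (y₂ - a₁)
      ≤ (y₁ - y₂) * (a₁ - a₂) / (2 * π * s ^ 2) := by
  rw [heatKernel_mul_heatKernel hs, heatKernel_mul_heatKernel hs, ← mul_sub]
  set E₁ := -((y₁ - a₁) ^ 2 + (y₂ - a₂) ^ 2) / (2 * s)
  set E₂ := -((y₁ - a₂) ^ 2 + (y₂ - a₁) ^ 2) / (2 * s)
  have hgap : E₁ - E₂ = (y₁ - y₂) * (a₁ - a₂) / s := by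
    simp only [E₁, E₂]; field_simp; ring
  have hE₁ : E₁ ≤ 0 := div_nonpos_of_nonpos_of_nonneg (by nlinarith) (by positivity)
  have hE₂ : E₂ ≤ E₁ := by
    have : 0 ≤ (y₁ - y₂) * (a₁ - a₂) / s := div_nonneg h hs.le
    linarith
  calc (2 * π * s)⁻¹ * (exp E₁ - exp E₂) ≤ (2 * π * s)⁻¹ * (E₁ - E₂) :=
        mul_le_mul_of_nonneg_left (exp_sub_exp_le_of_nonpos hE₁ hE₂) (by positivity)
    _ = (y₁ - y₂) * (a₁ - a₂) / (2 * π * s ^ 2) := by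
        rw [hgap]; field_simp

lemma inv_two_pi_mul_exp_neg_sq_le_heatKernel_one_mul {M a₁ a₂ : ℝ}
    (ha₁ : a₁ ∈ Set.Icc (-M) M) (ha₂ : a₂ ∈ Set.Icc (-M) M) :
    (2 * π)⁻¹ * exp (-M ^ 2) ≤ heatKernel 1 a₁ * heatKernel 1 a₂ := by
  rw [heatKernel_mul_heatKernel one_pos, mul_one]
  have h₁ : a₁ ^ 2 ≤ M ^ 2 := sq_le_sq' ha₁.1 ha₁.2
  have h₂ : a₂ ^ 2 ≤ M ^ 2 := sq_le_sq' ha₂.1 ha₂.2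
  gcongr
  linarith

theorem stmt_10_general (δ M : ℝ) (hδ : δ ∈ Set.Ioo (0 : ℝ) 1) :
    ∃ C : ℝ, C = 2 * (1 - δ) ^ (-(2 : ℝ)) * Real.exp (M ^ 2) ∧
      ∀ t ∈ Set.Ioo (0 : ℝ) δ, ∀ y₁ y₂ a₁ a₂ : ℝ,
        y₂ < y₁ → -M ≤ a₂ → a₂ < a₁ → a₁ ≤ M →
        heatKernel (1 - t) (y₁ - a₁) * heatKernel (1 - t) (y₂ - a₂)
          - heatKernel (1 - t) (y₁ - a₂) * heatKernel (1 - t) (y₂ - a₁)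
        ≤ C * ((y₁ - y₂) * (a₁ - a₂) * heatKernel 1 a₁ * heatKernel 1 a₂) := by
  refine ⟨_, rfl, ?_⟩
  rintro t ⟨-, htδ⟩ y₁ y₂ a₁ a₂ hy hMa₂ ha haM
  have hδ₁ : 0 < 1 - δ := by linarith [hδ.2]
  have hu : 0 ≤ (y₁ - y₂) * (a₁ - a₂) := mul_nonneg (by linarith) (by linarith)
  have hgauss := inv_two_pi_mul_exp_neg_sq_le_heatKernel_one_mul (M := M)
    ⟨by linarith, haM⟩ ⟨hMa₂, by linarith⟩
  rw [rpow_neg hδ₁.le, rpow_two, mul_assoc _ (heatKernel 1 a₁)]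
  calc _ ≤ (y₁ - y₂) * (a₁ - a₂) / (2 * π * (1 - t) ^ 2) :=
        heatKernel_det_le (by linarith) hu
    _ ≤ (y₁ - y₂) * (a₁ - a₂) / (2 * π * (1 - δ) ^ 2) := by gcongr
    _ = 1 * ((1 - δ) ^ 2)⁻¹ * exp (M ^ 2)
          * ((y₁ - y₂) * (a₁ - a₂) * ((2 * π)⁻¹ * exp (-M ^ 2))) := by
        rw [exp_neg]; field_simp
    _ ≤ _ := by gcongr; norm_num

theorem stmt_10 (δ M : ℝ) (hδ : δ ∈ Set.Ioo (0 : ℝ) 1) (hM : 0 < M) :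
    ∃ C : ℝ, C = 2 * (1 - δ) ^ (-(2 : ℝ)) * Real.exp (M ^ 2) ∧
      ∀ t ∈ Set.Ioo (0 : ℝ) δ, ∀ y₁ y₂ a₁ a₂ : ℝ,
        y₂ < y₁ → -M ≤ a₂ → a₂ < a₁ → a₁ ≤ M →
        heatKernel (1 - t) (y₁ - a₁) * heatKernel (1 - t) (y₂ - a₂)
          - heatKernel (1 - t) (y₁ - a₂) * heatKernel (1 - t) (y₂ - a₁)
        ≤ C * ((y₁ - y₂) * (a₁ - a₂) * heatKernel 1 a₁ * heatKernel 1 a₂) :=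
  stmt_10_general δ M hδ
end

section
/- Let p_t(x) = (2πt)^{−1/2} exp(−x²/(2t)). For fixed t > 0 and x₁ > x₂, ∫∫_{y₁ > y₂} (y₁ − y₂) · det( p_t(x_i − y_j) )_{i,j=1}² dy₁ dy₂ = x₁ − x₂. -/
/-! The heat kernel is the Gaussian density `p_t(x - y) = gaussianPDFReal x t y`, and the integrand
is `F(y) + F(y₂, y₁)` with `F(y) = (y₁ - y₂) p_t(x₁ - y₁) p_t(x₂ - y₂)`. As the diagonal is null, the
integral of `F + F ∘ swap` over `{y₂ < y₁}` is the integral of `F` over the whole plane, which is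
`E[X₁ - X₂] = x₁ - x₂` for independent `X_i ∼ N(x_i, t)`. -/

open MeasureTheory

open ProbabilityTheory
open scoped NNReal

lemma heatKernel_sub {t : ℝ} (ht : 0 ≤ t) (x y : ℝ) :
    heatKernel t (x - y) = gaussianPDFReal x t.toNNReal y := by
  rw [heatKernel, gaussianPDFReal, Real.coe_toNNReal t ht, ← neg_sub x y, neg_sq]

section Swap

variable {α : Type*} [MeasurableSpace α] [TopologicalSpace α] [LinearOrder α]
  [OrderClosedTopology α] [SecondCountableTopology α] [OpensMeasurableSpace α]
  {μ : Measure α} [SigmaFinite μ] [NullSingletonClass μ]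

lemma measure_prod_compl_lt_inter_compl_gt_eq_zero :
    μ.prod μ ({q | q.2 < q.1}ᶜ ∩ {q | q.1 < q.2}ᶜ) = 0 := by
  rw [Measure.measure_prod_null ((measurableSet_lt measurable_snd measurable_fst).compl.inter
    (measurableSet_lt measurable_fst measurable_snd).compl)]
  refine Filter.Eventually.of_forall fun a ↦ ?_
  have hslice : Prod.mk a ⁻¹' ({q : α × α | q.2 < q.1}ᶜ ∩ {q | q.1 < q.2}ᶜ) = {a} := by
    ext b
    simp [le_antisymm_iff, and_comm]
  simp [hslice]

lemma setIntegral_lt_add_comp_swap {F : α × α → ℝ} (hF : Integrable F (μ.prod μ)) :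
    ∫ q in {q : α × α | q.2 < q.1}, (F q + F q.swap) ∂μ.prod μ = ∫ q, F q ∂μ.prod μ := by
  have hS' : MeasurableSet {q : α × α | q.1 < q.2} := measurableSet_lt measurable_fst measurable_snd
  have hswap : ∫ q in {q : α × α | q.2 < q.1}, F q.swap ∂μ.prod μ
      = ∫ q in {q : α × α | q.1 < q.2}, F q ∂μ.prod μ :=
    (Measure.measurePreserving_swap (μ := μ) (ν := μ)).setIntegral_preimage_emb
      MeasurableEquiv.prodComm.measurableEmbedding F {q | q.1 < q.2}
  have hcover : ({q : α × α | q.2 < q.1} ∪ {q | q.1 < q.2} : Set (α × α))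
      =ᵐ[μ.prod μ] Set.univ := by
    rw [ae_eq_univ, Set.compl_union]
    exact measure_prod_compl_lt_inter_compl_gt_eq_zero
  have hFswap : Integrable (fun q ↦ F q.swap) (μ.prod μ) := hF.swap
  rw [integral_add hF.integrableOn hFswap.integrableOn, hswap,
    ← setIntegral_union _ hS' hF.integrableOn hF.integrableOn, setIntegral_congr_set hcover,
    setIntegral_univ]
  exact Set.disjoint_left.mpr fun q h₁ h₂ => lt_asymm h₁ h₂

end Swap

namespace ProbabilityTheory

variable {μ : ℝ} {v : ℝ≥0}

lemma integrable_mul_gaussianPDFReal (hv : v ≠ 0) :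
    Integrable fun x ↦ x * gaussianPDFReal μ v x := by
  have h := (memLp_id_gaussianReal (μ := μ) (v := v) 1).integrable le_rfl
  rw [gaussianReal_of_var_ne_zero μ hv, integrable_withDensity_iff_integrable_smul'
    (measurable_gaussianPDF μ v) (by simp [gaussianPDF])] at h
  simpa [mul_comm] using h

lemma integral_mul_gaussianPDFReal (hv : v ≠ 0) :
    ∫ x, x * gaussianPDFReal μ v x = μ := by
  simpa [mul_comm] using
    (integral_gaussianReal_eq_integral_smul (f := id) (μ := μ) hv).symm.trans integral_id_gaussianReal

variable {μ₁ μ₂ : ℝ} {v₁ v₂ : ℝ≥0}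

lemma sub_mul_gaussianPDFReal_mul_gaussianPDFReal (q : ℝ × ℝ) :
    (q.1 - q.2) * (gaussianPDFReal μ₁ v₁ q.1 * gaussianPDFReal μ₂ v₂ q.2)
      = q.1 * gaussianPDFReal μ₁ v₁ q.1 * gaussianPDFReal μ₂ v₂ q.2
        - gaussianPDFReal μ₁ v₁ q.1 * (q.2 * gaussianPDFReal μ₂ v₂ q.2) := by
  ring

lemma integrable_sub_mul_gaussianPDFReal_mul_gaussianPDFReal (hv₁ : v₁ ≠ 0) (hv₂ : v₂ ≠ 0) :
    Integrable fun q : ℝ × ℝ ↦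
      (q.1 - q.2) * (gaussianPDFReal μ₁ v₁ q.1 * gaussianPDFReal μ₂ v₂ q.2) := by
  simp_rw [sub_mul_gaussianPDFReal_mul_gaussianPDFReal, Measure.volume_eq_prod]
  exact ((integrable_mul_gaussianPDFReal hv₁).mul_prod (integrable_gaussianPDFReal μ₂ v₂)).sub
    ((integrable_gaussianPDFReal μ₁ v₁).mul_prod (integrable_mul_gaussianPDFReal hv₂))

lemma integral_sub_mul_gaussianPDFReal_mul_gaussianPDFReal (hv₁ : v₁ ≠ 0) (hv₂ : v₂ ≠ 0) :
    ∫ q : ℝ × ℝ, (q.1 - q.2) * (gaussianPDFReal μ₁ v₁ q.1 * gaussianPDFReal μ₂ v₂ q.2)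
      = μ₁ - μ₂ := by
  simp_rw [sub_mul_gaussianPDFReal_mul_gaussianPDFReal, Measure.volume_eq_prod]
  rw [integral_sub
    ((integrable_mul_gaussianPDFReal hv₁).mul_prod (integrable_gaussianPDFReal μ₂ v₂))
    ((integrable_gaussianPDFReal μ₁ v₁).mul_prod (integrable_mul_gaussianPDFReal hv₂)),
    integral_prod_mul (fun x ↦ x * gaussianPDFReal μ₁ v₁ x),
    integral_prod_mul _ (fun x ↦ x * gaussianPDFReal μ₂ v₂ x),
    integral_mul_gaussianPDFReal hv₁, integral_mul_gaussianPDFReal hv₂,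
    integral_gaussianPDFReal_eq_one μ₁ hv₁, integral_gaussianPDFReal_eq_one μ₂ hv₂, mul_one, one_mul]

end ProbabilityTheory

theorem stmt_11_general (t x₁ x₂ : ℝ) (ht : 0 < t) :
    ∫ y in {q : ℝ × ℝ | q.2 < q.1},
        (y.1 - y.2) * (heatKernel t (x₁ - y.1) * heatKernel t (x₂ - y.2)
          - heatKernel t (x₁ - y.2) * heatKernel t (x₂ - y.1))
      = x₁ - x₂ := by
  have hv : t.toNNReal ≠ 0 := by simpa using ht
  set F : ℝ × ℝ → ℝ := fun q ↦
    (q.1 - q.2) * (gaussianPDFReal x₁ t.toNNReal q.1 * gaussianPDFReal x₂ t.toNNReal q.2)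
  have hdet : ∀ y : ℝ × ℝ, (y.1 - y.2) * (heatKernel t (x₁ - y.1) * heatKernel t (x₂ - y.2)
      - heatKernel t (x₁ - y.2) * heatKernel t (x₂ - y.1)) = F y + F y.swap := by
    intro y
    simp only [heatKernel_sub ht.le, F, Prod.fst_swap, Prod.snd_swap]
    ring
  simp_rw [hdet, Measure.volume_eq_prod]
  rw [setIntegral_lt_add_comp_swap (integrable_sub_mul_gaussianPDFReal_mul_gaussianPDFReal hv hv)]
  exact integral_sub_mul_gaussianPDFReal_mul_gaussianPDFReal hv hv

theorem stmt_11 (t x₁ x₂ : ℝ) (ht : 0 < t) (hx : x₂ < x₁) :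
    ∫ y in {q : ℝ × ℝ | q.2 < q.1},
        (y.1 - y.2) * (heatKernel t (x₁ - y.1) * heatKernel t (x₂ - y.2)
          - heatKernel t (x₁ - y.2) * heatKernel t (x₂ - y.1))
      = x₁ - x₂ :=
  stmt_11_general t x₁ x₂ ht
end

section
/- Let p_t(x) = (2πt)^{−1/2} exp(−x²/(2t)) and fix a > 0. Then for every t ∈ (0,1), ∫₀^∞ (x/(a t)) · (p_t(x)/p₁(a)) · ( p_{1−t}(x − a) − p_{1−t}(x + a) ) dx = 1. -/
/-!
Completing the square gives `p_t(x) p_{1-t}(x ∓ a) = p_1(a) p_{t(1-t)}(x ∓ a t)`, so the integrand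
is `(a t)⁻¹ x (q(x - a t) - q(x + a t))` with `q` the centred Gaussian density of variance
`t(1-t)`. This function is even, so its integral over `[0, ∞)` is half its integral over `ℝ`, which
is the difference `a t - (-a t)` of the means of two Gaussians.
-/

open MeasureTheory

open Real Set ProbabilityTheory

lemma heatKernel_neg (s x : ℝ) : heatKernel s (-x) = heatKernel s x := by
  simp only [heatKernel, neg_sq]

lemma heatKernel_sub_eq_gaussianPDFReal {s : ℝ} (hs : 0 ≤ s) (c x : ℝ) :
    heatKernel s (x - c) = gaussianPDFReal c s.toNNReal x := by
  rw [heatKernel, gaussianPDFReal, Real.coe_toNNReal s hs]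

lemma integrable_mul_heatKernel_sub {s : ℝ} (hs : 0 < s) (c : ℝ) :
    Integrable (fun x ↦ x * heatKernel s (x - c)) := by
  have hv : s.toNNReal ≠ 0 := by simpa using hs
  have h := (memLp_id_gaussianReal (μ := c) (v := s.toNNReal) 1).integrable le_rfl
  rw [gaussianReal_of_var_ne_zero c hv, integrable_withDensity_iff_integrable_smul'
    (measurable_gaussianPDF c _) (ae_of_all _ fun _ ↦ gaussianPDF_lt_top)] at h
  refine h.congr (ae_of_all _ fun x ↦ ?_)
  simp [toReal_gaussianPDF, heatKernel_sub_eq_gaussianPDFReal hs.le, mul_comm]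

lemma integral_mul_heatKernel_sub {s : ℝ} (hs : 0 < s) (c : ℝ) :
    ∫ x, x * heatKernel s (x - c) = c := by
  have hv : s.toNNReal ≠ 0 := by simpa using hs
  simp_rw [heatKernel_sub_eq_gaussianPDFReal hs.le, mul_comm _ (gaussianPDFReal _ _ _)]
  simpa using (integral_gaussianReal_eq_integral_smul (μ := c) (f := id) hv).symm.trans
    integral_id_gaussianReal

lemma integral_mul_heatKernel_sub_sub_add {s : ℝ} (hs : 0 < s) (c : ℝ) :
    ∫ x, x * (heatKernel s (x - c) - heatKernel s (x + c)) = 2 * c := by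
  have hadd : ∀ x, x + c = x - -c := fun x ↦ (sub_neg_eq_add x c).symm
  simp_rw [mul_sub, hadd]
  rw [integral_sub (integrable_mul_heatKernel_sub hs c)
    (integrable_mul_heatKernel_sub hs (-c)), integral_mul_heatKernel_sub hs,
    integral_mul_heatKernel_sub hs]
  ring

lemma integral_Ioi_eq_half_integral_of_even {f : ℝ → ℝ} (hf : Function.Even f) :
    ∫ x in Ioi 0, f x = (∫ x, f x) / 2 := by
  have habs : ∀ x, f |x| = f x := fun x ↦ by
    rcases abs_choice x with h | h <;> simp [h, hf x]
  rw [eq_div_iff two_ne_zero, mul_comm, ← integral_comp_abs]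
  simp_rw [habs]

lemma integral_Ioi_mul_heatKernel_sub_sub_add {s : ℝ} (hs : 0 < s) (c : ℝ) :
    ∫ x in Ioi 0, x * (heatKernel s (x - c) - heatKernel s (x + c)) = c := by
  have heven : Function.Even fun x ↦ x * (heatKernel s (x - c) - heatKernel s (x + c)) := by
    intro x
    dsimp only
    rw [show -x - c = -(x + c) by ring, show -x + c = -(x - c) by ring,
      heatKernel_neg, heatKernel_neg]
    ring
  rw [integral_Ioi_eq_half_integral_of_even heven, integral_mul_heatKernel_sub_sub_add hs]
  ring

lemma heatKernel_mul_heatKernel_sub {s u : ℝ} (hs : 0 < s) (hu : 0 < u) (c x : ℝ) :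
    heatKernel s x * heatKernel u (x - c)
      = heatKernel (s + u) c * heatKernel (s * u / (s + u)) (x - s / (s + u) * c) := by
  have hsu : 0 < s + u := by positivity
  have hsqrt : √(2 * π * s) * √(2 * π * u)
      = √(2 * π * (s + u)) * √(2 * π * (s * u / (s + u))) := by
    rw [← sqrt_mul (by positivity), ← sqrt_mul (by positivity)]
    congr 1
    field_simp
  have hexp : -x ^ 2 / (2 * s) + -(x - c) ^ 2 / (2 * u)
      = -c ^ 2 / (2 * (s + u)) + -(x - s / (s + u) * c) ^ 2 / (2 * (s * u / (s + u))) := by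
    field_simp
    ring
  simp only [heatKernel]
  rw [mul_mul_mul_comm, ← mul_inv, hsqrt, ← exp_add, hexp, exp_add, mul_inv]
  ring

lemma heatKernel_mul_heatKernel_sub_sub_add {t : ℝ} (ht : t ∈ Ioo (0 : ℝ) 1) (a x : ℝ) :
    heatKernel t x * (heatKernel (1 - t) (x - a) - heatKernel (1 - t) (x + a))
      = heatKernel 1 a
        * (heatKernel (t * (1 - t)) (x - a * t) - heatKernel (t * (1 - t)) (x + a * t)) := by
  have h := heatKernel_mul_heatKernel_sub ht.1 (sub_pos.2 ht.2)
  simp only [add_sub_cancel, div_one] at h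
  have hneg := h (-a) x
  rw [sub_neg_eq_add, heatKernel_neg, mul_neg, sub_neg_eq_add] at hneg
  rw [mul_sub, h, hneg, mul_comm t a]
  ring

theorem stmt_13 (a t : ℝ) (ha : 0 < a) (ht : t ∈ Set.Ioo (0 : ℝ) 1) :
    ∫ x in Set.Ici (0 : ℝ),
        x / (a * t) * (heatKernel t x / heatKernel 1 a)
          * (heatKernel (1 - t) (x - a) - heatKernel (1 - t) (x + a)) = 1 := by
  have hat : a * t ≠ 0 := (mul_pos ha ht.1).ne'
  have hp : heatKernel 1 a ≠ 0 := by unfold heatKernel; positivity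
  have hintegrand : ∀ x, x / (a * t) * (heatKernel t x / heatKernel 1 a)
        * (heatKernel (1 - t) (x - a) - heatKernel (1 - t) (x + a))
      = (a * t)⁻¹ * (x * (heatKernel (t * (1 - t)) (x - a * t)
          - heatKernel (t * (1 - t)) (x + a * t))) := fun x ↦ by
    calc _ = x / (a * t) / heatKernel 1 a
          * (heatKernel t x * (heatKernel (1 - t) (x - a) - heatKernel (1 - t) (x + a))) := by
          ring
      _ = _ := by
          rw [heatKernel_mul_heatKernel_sub_sub_add ht]
          field_simp
  simp_rw [hintegrand]
  rw [integral_Ici_eq_integral_Ioi, integral_const_mul,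
    integral_Ioi_mul_heatKernel_sub_sub_add (mul_pos ht.1 (sub_pos.2 ht.2)), inv_mul_cancel₀ hat]
end
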